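/- arXiv:2401.00189 — 4 statements merged into one kernel-verified Lean document; each statement's English description precedes it below -/
import Mathlib

section
/- If A is an R₀-tensor of order m and dimension n, then for every q ∈ ℝⁿ the solution set SOL(q, A) of the tensor complementarity problem TCP(q, A) is bounded. -/
def tmul {n k : ℕ} (a : Fin n → (Fin k → Fin n) → ℝ) (x : Fin n → ℝ) (i : Fin n) : ℝ :=
  ∑ j : Fin k → Fin n, a i j * ∏ t : Fin k, x (j t)

/-- Solution set of the tensor complementarity problem TCP(q, A). -/
def SOL {n k : ℕ} (q : Fin n → ℝ) (a : Fin n → (Fin k → Fin n) → ℝ) : Set (Fin n → ℝ) :=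
  {x | (∀ i, 0 ≤ x i) ∧ (∀ i, 0 ≤ tmul a x i + q i) ∧ ∑ i, x i * (tmul a x i + q i) = 0}

lemma tmul_smul {n k : ℕ} (a : Fin n → (Fin k → Fin n) → ℝ) (c : ℝ) (x : Fin n → ℝ)
    (i : Fin n) : tmul a (c • x) i = c ^ k * tmul a x i := by
  unfold tmul
  rw [Finset.mul_sum]
  refine Finset.sum_congr rfl fun j _ => ?_
  have : (∏ t : Fin k, (c • x) (j t)) = c ^ k * ∏ t : Fin k, x (j t) := by
    simp [Finset.prod_mul_distrib]
  rw [this]; ring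

lemma tmul_continuous {n k : ℕ} (a : Fin n → (Fin k → Fin n) → ℝ) (i : Fin n) :
    Continuous fun x : Fin n → ℝ => tmul a x i := by
  unfold tmul
  exact continuous_finset_sum _ fun j _ =>
    continuous_const.mul (continuous_finset_prod _ fun t _ => continuous_apply _)

/-- If `A` is an `R₀`-tensor (order `m = k+1 ≥ 2`), then for every `q` the solution set
of TCP(q, A) is bounded. -/
theorem SOL_bounded_of_R0 {n k : ℕ} (hk : 1 ≤ k) (a : Fin n → (Fin k → Fin n) → ℝ)
    (hR0 : SOL 0 a = {0}) :
    ∀ q : Fin n → ℝ, Bornology.IsBounded (SOL q a) := by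
  intro q
  rw [isBounded_iff_forall_norm_le]
  rcases Nat.eq_zero_or_pos n with hn | hn
  · subst hn
    refine ⟨0, fun x _ => ?_⟩
    have hx : x = 0 := funext fun i => i.elim0
    simp [hx]
  -- n ≥ 1
  set f : (Fin n → ℝ) → ℝ := fun x =>
    |∑ i, x i * tmul a x i| + ∑ i, max 0 (-(tmul a x i)) with hf_def
  have hf_cont : Continuous f := by
    apply Continuous.add
    · exact (continuous_finset_sum _ fun i _ =>
        (continuous_apply i).mul (tmul_continuous a i)).abs
    · exact continuous_finset_sum _ fun i _ =>
        continuous_const.max (tmul_continuous a i).neg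
  set K : Set (Fin n → ℝ) := {y | (∀ i, 0 ≤ y i) ∧ ‖y‖ = 1} with hK
  have hKc : IsCompact K := by
    have h1 : IsClosed K := by
      have hEq : K = (⋂ i, {y : Fin n → ℝ | 0 ≤ y i}) ∩ {y | ‖y‖ = 1} := by
        ext y; simp [hK, Set.mem_iInter]
      rw [hEq]
      exact (isClosed_iInter fun i =>
        isClosed_le continuous_const (continuous_apply i)).inter
        (isClosed_eq continuous_norm continuous_const)
    have h2 : Bornology.IsBounded K := by
      rw [isBounded_iff_forall_norm_le]; exact ⟨1, fun y hy => hy.2.le⟩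
    exact Metric.isCompact_of_isClosed_isBounded h1 h2
  have : Nonempty (Fin n) := ⟨⟨0, hn⟩⟩
  have hKne : K.Nonempty := by
    refine ⟨fun _ => (1 : ℝ), fun i => zero_le_one, ?_⟩
    simpa using (Pi.norm_const (ι := Fin n) (1 : ℝ))
  obtain ⟨z, hzK, hz⟩ := hKc.exists_isMinOn hKne hf_cont.continuousOn
  have hε : 0 < f z := by
    rcases lt_or_eq_of_le (add_nonneg (abs_nonneg _)
      (Finset.sum_nonneg fun i _ => le_max_left _ _) : (0:ℝ) ≤ f z) with h | h
    · exact h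
    exfalso
    have habs : |∑ i, z i * tmul a z i| = 0 ∧
        (∑ i, max 0 (-(tmul a z i))) = 0 := by
      constructor <;> nlinarith [abs_nonneg (∑ i, z i * tmul a z i),
        Finset.sum_nonneg (fun i (_ : i ∈ Finset.univ) =>
          le_max_left (0:ℝ) (-(tmul a z i)))]
    have hpos : ∀ i, 0 ≤ tmul a z i := by
      intro i
      have := (Finset.sum_eq_zero_iff_of_nonneg
        (fun i _ => le_max_left (0:ℝ) (-(tmul a z i)))).mp habs.2 i (Finset.mem_univ i)
      have h2 : -(tmul a z i) ≤ 0 := by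
        by_contra hcon; push_neg at hcon
        rw [max_eq_right hcon.le] at this; linarith
      linarith
    have hzSOL : z ∈ SOL (0 : Fin n → ℝ) a := by
      refine ⟨hzK.1, fun i => by simpa using hpos i, ?_⟩
      have := abs_eq_zero.mp habs.1
      simpa using this
    rw [hR0] at hzSOL
    have : ‖z‖ = 1 := hzK.2
    rw [hzSOL] at this
    simp at this
  set C : ℝ := ∑ i, |q i| with hC_def
  have hC : 0 ≤ C := Finset.sum_nonneg fun i _ => abs_nonneg _
  refine ⟨max 1 (2 * C / f z), fun x hx => ?_⟩
  by_cases hx1 : ‖x‖ ≤ 1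
  · exact hx1.trans (le_max_left _ _)
  push_neg at hx1
  obtain ⟨hx0, hxq, hxs⟩ := hx
  set t : ℝ := ‖x‖ with ht_def
  have ht : 0 < t := lt_trans one_pos hx1
  set y : Fin n → ℝ := t⁻¹ • x with hy
  have hyK : y ∈ K := by
    constructor
    · intro i
      exact mul_nonneg (inv_nonneg.mpr ht.le) (hx0 i)
    · rw [hy, norm_smul, Real.norm_eq_abs, abs_of_pos (inv_pos.mpr ht)]
      exact inv_mul_cancel₀ ht.ne'
  have hty : ∀ i, tmul a y i = t⁻¹ ^ k * tmul a x i := fun i => tmul_smul a _ x i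
  have hxabs : ∀ i, |x i| ≤ t := by
    intro i
    simpa [Real.norm_eq_abs] using norm_le_pi_norm x i
  -- complementarity rewritten
  have hxs' : ∑ i, x i * tmul a x i = -∑ i, x i * q i := by
    have h := hxs
    rw [show (∑ i, x i * (tmul a x i + q i))
        = (∑ i, x i * tmul a x i) + ∑ i, x i * q i by
      rw [← Finset.sum_add_distrib]
      exact Finset.sum_congr rfl fun i _ => by ring] at h
    linarith
  have hsum_y : ∑ i, y i * tmul a y i = t⁻¹ ^ (k + 1) * ∑ i, x i * tmul a x i := by
    rw [Finset.mul_sum]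
    refine Finset.sum_congr rfl fun i _ => ?_
    rw [hty i]
    show t⁻¹ * x i * (t⁻¹ ^ k * tmul a x i) = _
    rw [pow_succ]; ring
  have hb1 : |∑ i, y i * tmul a y i| ≤ t⁻¹ ^ k * C := by
    rw [hsum_y, hxs', abs_mul, abs_neg,
      abs_of_nonneg (pow_nonneg (inv_nonneg.mpr ht.le) _)]
    have h1 : |∑ i, x i * q i| ≤ t * C := by
      calc |∑ i, x i * q i| ≤ ∑ i, |x i * q i| := Finset.abs_sum_le_sum_abs _ _
        _ ≤ ∑ i, t * |q i| := Finset.sum_le_sum fun i _ => by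
            rw [abs_mul]
            exact mul_le_mul_of_nonneg_right (hxabs i) (abs_nonneg _)
        _ = t * C := by rw [Finset.mul_sum]
    calc t⁻¹ ^ (k + 1) * |∑ i, x i * q i| ≤ t⁻¹ ^ (k + 1) * (t * C) :=
          mul_le_mul_of_nonneg_left h1 (pow_nonneg (inv_nonneg.mpr ht.le) _)
      _ = t⁻¹ ^ k * C := by
          rw [pow_succ]
          field_simp
  have hb2 : ∑ i, max 0 (-(tmul a y i)) ≤ t⁻¹ ^ k * C := by
    rw [hC_def, Finset.mul_sum]
    refine Finset.sum_le_sum fun i _ => ?_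
    have hqi : -(tmul a x i) ≤ q i := by have := hxq i; linarith
    have h1 : -(tmul a y i) ≤ t⁻¹ ^ k * |q i| := by
      rw [hty i]
      calc -(t⁻¹ ^ k * tmul a x i) = t⁻¹ ^ k * (-(tmul a x i)) := by ring
        _ ≤ t⁻¹ ^ k * |q i| :=
          mul_le_mul_of_nonneg_left (hqi.trans (le_abs_self _))
            (pow_nonneg (inv_nonneg.mpr ht.le) _)
    exact max_le (mul_nonneg (pow_nonneg (inv_nonneg.mpr ht.le) _) (abs_nonneg _)) h1
  have hfy : f y ≤ 2 * (t⁻¹ ^ k * C) := by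
    have := add_le_add hb1 hb2
    simpa [hf_def, two_mul] using this
  have hεy : f z ≤ f y := hz hyK
  -- conclude
  have htk : (0:ℝ) < t ^ k := pow_pos ht k
  have hinv : t⁻¹ ^ k * t ^ k = 1 := by
    rw [← mul_pow, inv_mul_cancel₀ ht.ne', one_pow]
  have hkey : f z * t ^ k ≤ 2 * C := by
    have h := hεy.trans hfy
    have := mul_le_mul_of_nonneg_right h htk.le
    calc f z * t ^ k ≤ 2 * (t⁻¹ ^ k * C) * t ^ k := this
      _ = 2 * C * (t⁻¹ ^ k * t ^ k) := by ring
      _ = 2 * C := by rw [hinv, mul_one]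
  have hts : t ≤ t ^ k := le_self_pow₀ hx1.le (by omega)
  have : f z * t ≤ 2 * C := by
    calc f z * t ≤ f z * t ^ k := mul_le_mul_of_nonneg_left hts hε.le
      _ ≤ 2 * C := hkey
  have : t ≤ 2 * C / f z := (le_div_iff₀ hε).mpr (by linarith [this])
  exact this.trans (le_max_right _ _)
end

section
/- Under the hypotheses of the inclusion theorem, suppose additionally that for each index i there exist ω'_i, ω̄_i ∈ Ω such that the i-th row subtensor of A_min equals the i-th row subtensor of A(ω'_i) with (q_min)_i = q(ω'_i)_i, and the i-th row subtensor of A_max equals that of A(ω̄_i) with (q_max)_i = q(ω̄_i)_i. Then S* = SOL(q_max, A_max) ∩ SOL(q_min, A_min). -/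
lemma tmul_mono {n k : ℕ} {a b : Fin n → (Fin k → Fin n) → ℝ} {x : Fin n → ℝ}
    (hx : ∀ i, 0 ≤ x i) (i : Fin n) (h : ∀ j, a i j ≤ b i j) :
    tmul a x i ≤ tmul b x i :=
  Finset.sum_le_sum fun j _ =>
    mul_le_mul_of_nonneg_right (h j) (Finset.prod_nonneg fun t _ => hx (j t))

lemma tmul_row_congr {n k : ℕ} {a b : Fin n → (Fin k → Fin n) → ℝ} {x : Fin n → ℝ}
    {i : Fin n} (h : ∀ j, a i j = b i j) : tmul a x i = tmul b x i :=
  Finset.sum_congr rfl fun j _ => by rw [h j]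

lemma comp_term_zero {n : ℕ} {x s : Fin n → ℝ} (hx : ∀ i, 0 ≤ x i)
    (hs : ∀ i, 0 ≤ s i) (hsum : ∑ i, x i * s i = 0) (i : Fin n) : x i * s i = 0 :=
  (Finset.sum_eq_zero_iff_of_nonneg (fun j _ => mul_nonneg (hx j) (hs j))).mp hsum i
    (Finset.mem_univ i)

/-- If in addition each row subtensor of `A_min` (resp. `A_max`) together with the
corresponding component of `q_min` (resp. `q_max`) is attained at a common `ω'_i ∈ Ω`
(resp. `ω̄_i ∈ Ω`), then `S* = SOL(q_max, A_max) ∩ SOL(q_min, A_min)`. -/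
theorem sitcp_eq_sol_max_min {n k p : ℕ} (Ω : Set (Fin p → ℝ)) (hΩ : IsCompact Ω)
    (A : (Fin p → ℝ) → Fin n → (Fin k → Fin n) → ℝ) (q : (Fin p → ℝ) → Fin n → ℝ)
    (hA : ∀ i j, ContinuousOn (fun ω => A ω i j) Ω)
    (hq : ∀ i, ContinuousOn (fun ω => q ω i) Ω)
    (Amax Amin : Fin n → (Fin k → Fin n) → ℝ) (qmax qmin : Fin n → ℝ)
    (hAmax : ∀ i j, IsGreatest ((fun ω => A ω i j) '' Ω) (Amax i j))
    (hAmin : ∀ i j, IsLeast ((fun ω => A ω i j) '' Ω) (Amin i j))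
    (hqmax : ∀ i, IsGreatest ((fun ω => q ω i) '' Ω) (qmax i))
    (hqmin : ∀ i, IsLeast ((fun ω => q ω i) '' Ω) (qmin i))
    (hmin_attained : ∀ i, ∃ ω' ∈ Ω, (∀ j, Amin i j = A ω' i j) ∧ qmin i = q ω' i)
    (hmax_attained : ∀ i, ∃ ω' ∈ Ω, (∀ j, Amax i j = A ω' i j) ∧ qmax i = q ω' i) :
    (⋂ ω ∈ Ω, SOL (q ω) (A ω)) = SOL qmax Amax ∩ SOL qmin Amin := by
  ext x
  simp only [Set.mem_iInter, Set.mem_inter_iff]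
  constructor
  · intro hx
    have hx0 : ∀ i, 0 ≤ x i := by
      intro i
      obtain ⟨ω1, hω1, _, _⟩ := hmax_attained i
      exact (hx ω1 hω1).1 i
    have hmaxrow : ∀ i, ∃ ω1 ∈ Ω, tmul Amax x i + qmax i = tmul (A ω1) x i + q ω1 i := by
      intro i
      obtain ⟨ω1, hω1, hA1, hq1⟩ := hmax_attained i
      exact ⟨ω1, hω1, by rw [tmul_row_congr hA1, hq1]⟩
    have hminrow : ∀ i, ∃ ω1 ∈ Ω, tmul Amin x i + qmin i = tmul (A ω1) x i + q ω1 i := by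
      intro i
      obtain ⟨ω1, hω1, hA1, hq1⟩ := hmin_attained i
      exact ⟨ω1, hω1, by rw [tmul_row_congr hA1, hq1]⟩
    have key : ∀ (B : Fin n → (Fin k → Fin n) → ℝ) (r : Fin n → ℝ),
        (∀ i, ∃ ω1 ∈ Ω, tmul B x i + r i = tmul (A ω1) x i + q ω1 i) →
        x ∈ SOL r B := by
      intro B r hrow
      have hslack : ∀ i, 0 ≤ tmul B x i + r i := by
        intro i
        obtain ⟨ω1, hω1, heq⟩ := hrow i
        rw [heq]; exact (hx ω1 hω1).2.1 i
      refine ⟨hx0, hslack, Finset.sum_eq_zero fun i _ => ?_⟩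
      obtain ⟨ω1, hω1, heq⟩ := hrow i
      rw [heq]
      exact comp_term_zero (hx ω1 hω1).1 (hx ω1 hω1).2.1 (hx ω1 hω1).2.2 i
    exact ⟨key Amax qmax hmaxrow, key Amin qmin hminrow⟩
  · rintro ⟨⟨hx0, hsmax, hcmax⟩, ⟨_, hsmin, hcmin⟩⟩ ω hω
    have hslack : ∀ i, 0 ≤ tmul (A ω) x i + q ω i := by
      intro i
      refine le_trans (hsmin i) (add_le_add (tmul_mono hx0 i fun j => ?_) ?_)
      · exact (hAmin i j).2 ⟨ω, hω, rfl⟩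
      · exact (hqmin i).2 ⟨ω, hω, rfl⟩
    refine ⟨hx0, hslack, Finset.sum_eq_zero fun i _ => ?_⟩
    have hle : x i * (tmul (A ω) x i + q ω i) ≤ x i * (tmul Amax x i + qmax i) := by
      refine mul_le_mul_of_nonneg_left (add_le_add (tmul_mono hx0 i fun j => ?_) ?_) (hx0 i)
      · exact (hAmax i j).2 ⟨ω, hω, rfl⟩
      · exact (hqmax i).2 ⟨ω, hω, rfl⟩
    have := comp_term_zero hx0 hsmax hcmax i
    exact le_antisymm (this ▸ hle) (mul_nonneg (hx0 i) (hslack i))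
end

section
/- Consider the order-3 dimension-2 tensor A(ω) with entries a₁₁₁ = 1−2ω³, a₁₂₁ = a₁₁₂ = 1−ω, a₁₂₂ = −1, a₂₁₁ = a₂₁₂ = a₂₂₁ = 0, a₂₂₂ = −ω², and q(ω) = (1, ω²)ᵀ, with ω ranging over Ω = [0,1]. Then the semi-infinite solution set S* = ∩_{ω∈[0,1]} SOL(q(ω), A(ω)) equals {(0,0)ᵀ, (0,1)ᵀ}. -/
/-- The order-3, dimension-2 tensor `A(ω)` of the example:
`a₁₁₁ = 1-2ω³`, `a₁₂₁ = a₁₁₂ = 1-ω`, `a₁₂₂ = -1`, `a₂₁₁ = a₂₁₂ = a₂₂₁ = 0`, `a₂₂₂ = -ω²`. -/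
def Aex (ω : ℝ) : Fin 2 → (Fin 2 → Fin 2) → ℝ := fun i j =>
  if i = 0 then
    if j 0 = 0 ∧ j 1 = 0 then 1 - 2 * ω ^ 3
    else if j 0 = 1 ∧ j 1 = 1 then -1
    else 1 - ω
  else
    if j 0 = 1 ∧ j 1 = 1 then -ω ^ 2 else 0

lemma tmul_eq (a : Fin 2 → (Fin 2 → Fin 2) → ℝ) (x : Fin 2 → ℝ) (i : Fin 2) :
    tmul a x i = a i ![0,0] * (x 0 * x 0) + a i ![0,1] * (x 0 * x 1)
      + a i ![1,0] * (x 1 * x 0) + a i ![1,1] * (x 1 * x 1) := by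
  unfold tmul
  rw [show (Finset.univ : Finset (Fin 2 → Fin 2)) = {![0,0],![0,1],![1,0],![1,1]} by decide]
  rw [Finset.sum_insert (by decide), Finset.sum_insert (by decide),
      Finset.sum_insert (by decide), Finset.sum_singleton]
  simp [Fin.prod_univ_two]
  ring

lemma tmul0 (ω : ℝ) (x : Fin 2 → ℝ) :
    tmul (Aex ω) x 0 = (1 - 2*ω^3) * (x 0)^2 + 2*(1-ω) * (x 0 * x 1) - (x 1)^2 := by
  rw [tmul_eq]; norm_num [Aex]; ring

lemma tmul1 (ω : ℝ) (x : Fin 2 → ℝ) :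
    tmul (Aex ω) x 1 = -ω^2 * (x 1)^2 := by
  have h0 : Aex ω 1 ![0,0] = 0 := by norm_num [Aex]
  have h1 : Aex ω 1 ![0,1] = 0 := by norm_num [Aex]
  have h2 : Aex ω 1 ![1,0] = 0 := by norm_num [Aex]
  have h3 : Aex ω 1 ![1,1] = -ω^2 := by norm_num [Aex]
  rw [tmul_eq, h0, h1, h2, h3]; ring

lemma mem_SOL_iff (ω : ℝ) (x : Fin 2 → ℝ) :
    x ∈ SOL ![1, ω ^ 2] (Aex ω) ↔
      (0 ≤ x 0 ∧ 0 ≤ x 1) ∧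
      (0 ≤ tmul (Aex ω) x 0 + 1 ∧ 0 ≤ tmul (Aex ω) x 1 + ω^2) ∧
      x 0 * (tmul (Aex ω) x 0 + 1) + x 1 * (tmul (Aex ω) x 1 + ω^2) = 0 := by
  unfold SOL
  simp [Fin.forall_fin_two, Fin.sum_univ_two]

/-- The semi-infinite solution set of SITCP(q(ω), A(ω), [0,1]) with `q(ω) = (1, ω²)ᵀ`
equals `{(0,0)ᵀ, (0,1)ᵀ}`. -/
theorem sitcp_example_solution_set :
    (⋂ ω ∈ Set.Icc (0 : ℝ) 1, SOL ![1, ω ^ 2] (Aex ω)) = {![0, 0], ![0, 1]} := by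
  ext x
  simp only [Set.mem_iInter, Set.mem_insert_iff, Set.mem_singleton_iff]
  constructor
  · intro h
    have h0 := (mem_SOL_iff 0 x).1 (h 0 (by norm_num))
    have h1 := (mem_SOL_iff 1 x).1 (h 1 (by norm_num))
    rw [tmul0, tmul1] at h0 h1
    obtain ⟨⟨hx0, hx1⟩, ⟨hF0, hF1⟩, hsum1⟩ := h1
    obtain ⟨-, ⟨hG0, -⟩, hsum0⟩ := h0
    have t1 : x 1 * (1 - (x 1)^2) = 0 := by
      nlinarith [mul_nonneg hx0 hF0, mul_nonneg hx1 hF1]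
    have hx1cases : x 1 = 0 ∨ x 1 = 1 := by
      rcases mul_eq_zero.1 t1 with h | h
      · exact Or.inl h
      · right; nlinarith
    have hx0eq : x 0 = 0 := by
      have hle : x 0 ≤ 0 := by
        rcases hx1cases with h | h <;> rw [h] at hsum0 <;> nlinarith [sq_nonneg (x 0)]
      linarith
    rcases hx1cases with h | h
    · left; funext i; fin_cases i <;> simp [hx0eq, h]
    · right; funext i; fin_cases i <;> simp [hx0eq, h]
  · intro h ω hω
    rw [mem_SOL_iff, tmul0, tmul1]
    rcases h with h | h <;> subst h <;> norm_num <;>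
      nlinarith [hω.1, hω.2, sq_nonneg ω]
end

section
/- Suppose Ω is compact, the entries of A(ω) are continuous on Ω, and the semi-infinite tensor complementarity problem SITCP(q, A(ω), Ω) is feasible for every continuous q : Ω → ℝⁿ. Then A(ω) is a semi-infinite S-tensor relative to Ω, i.e., there exists x > 0 with A(ω)x^{m-1} > 0 for all ω ∈ Ω. -/
/-- If `Ω` is compact, the entries of `A(ω)` are continuous on `Ω`, and SITCP(q, A(ω), Ω)
is feasible for every continuous `q : Ω → ℝⁿ`, then `A(ω)` is a semi-infinite S-tensor
relative to `Ω`. -/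
theorem semiInfinite_S_tensor_of_feasible {n k p : ℕ} (hk : 1 ≤ k)
    (Ω : Set (Fin p → ℝ)) (hΩ : IsCompact Ω)
    (A : (Fin p → ℝ) → Fin n → (Fin k → Fin n) → ℝ)
    (hA : ∀ i j, ContinuousOn (fun ω => A ω i j) Ω)
    (hfeas : ∀ q : (Fin p → ℝ) → Fin n → ℝ, (∀ i, ContinuousOn (fun ω => q ω i) Ω) →
      ∃ x : Fin n → ℝ, (∀ i, 0 ≤ x i) ∧ ∀ ω ∈ Ω, ∀ i, 0 ≤ tmul (A ω) x i + q ω i) :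
    ∃ x : Fin n → ℝ, (∀ i, 0 < x i) ∧ ∀ ω ∈ Ω, ∀ i, 0 < tmul (A ω) x i := by
  obtain ⟨x, hx0, hx1⟩ := hfeas (fun _ _ => (-1 : ℝ)) (fun _ => continuousOn_const)
  -- view Ω as a compact space
  haveI : CompactSpace Ω := isCompact_iff_compactSpace.mp hΩ
  -- the perturbed tensor product, as a function on ℝ × Ω
  set f : Fin n → ℝ × Ω → ℝ :=
    fun i z => tmul (A (z.2 : Fin p → ℝ)) (fun t => x t + z.1) i with hf
  have hcont : ∀ i, Continuous (f i) := by
    intro i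
    apply continuous_finset_sum
    intro j _
    have hAij : Continuous fun z : ℝ × Ω => A (z.2 : Fin p → ℝ) i j :=
      ((hA i j).restrict).comp continuous_snd
    exact hAij.mul (continuous_finset_prod _ fun t _ =>
      (continuous_const.add continuous_fst))
  set U : Set (ℝ × Ω) := ⋂ i, {z | 0 < f i z} with hU
  have hUopen : IsOpen U :=
    isOpen_iInter_of_finite fun i => isOpen_lt continuous_const (hcont i)
  have hsub : ({0} : Set ℝ) ×ˢ (Set.univ : Set Ω) ⊆ U := by
    rintro ⟨l, ω⟩ ⟨hl, -⟩
    simp only [Set.mem_singleton_iff] at hl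
    subst hl
    refine Set.mem_iInter.mpr fun i => ?_
    have h0 : f i (0, ω) = tmul (A (ω : Fin p → ℝ)) x i := by
      simp [hf]
    have := hx1 (ω : Fin p → ℝ) ω.2 i
    simp only [Set.mem_setOf_eq, h0]
    linarith
  obtain ⟨u, v, hu, hv, h0u, huniv, huv⟩ :=
    generalized_tube_lemma isCompact_singleton isCompact_univ hUopen hsub
  have h0u' : (0 : ℝ) ∈ u := h0u rfl
  obtain ⟨ε, hε, hball⟩ := Metric.isOpen_iff.mp hu 0 h0u'
  refine ⟨fun t => x t + ε / 2, fun i => by have := hx0 i; positivity, ?_⟩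
  intro ω hω i
  have hmem : ((ε / 2 : ℝ), (⟨ω, hω⟩ : Ω)) ∈ U := by
    apply huv
    constructor
    · apply hball
      simp only [Metric.mem_ball, Real.dist_eq, sub_zero]
      rw [abs_of_pos (by positivity : (0:ℝ) < ε / 2)]
      linarith
    · exact huniv (Set.mem_univ _)
  exact Set.mem_iInter.mp hmem i
end
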